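/- For any positive integer n and real number a ≠ 0, Σ_{k=0}^{n-1} C(a,k)*C(-1-a,k)*C(2k,k)/(4^k (k+1)) = S_n(a) + ((a+1)/a)·S_n(a+1) + F(a,n)·R(a,n), where S_n(a) = Σ_{k=0}^{n-1} C(a,k)C(-1-a,k)C(2k,k)/4^k, F(a,n) = (C(a,n)C(-1-a,n)(1/(n+1) - 1) - ((a+1)/a)·C(a+1,n)C(-2-a,n))·C(2n,n)/4^n, and R(a,n) = -2n^2(n+1)/(n^2 + 2(a+1)^2 n + (a+1)^2). -/

import Mathlib

/-!
Gosper's algorithm in the form of a telescoping sum. Termwise, the left side minus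
`S a n + (a + 1) / a * S (a + 1) n` is `∑_{k<n} F a k`, and `G k := F a k * R a k` is an
antidifference of `F a k`: `G 1 = F a 0` and `G (k + 1) = G k + F a k` for `k ≥ 1`.
The latter becomes a rational identity in `a` and `k` once `C(a+1,k) C(-2-a,k)` is traded
for `C(a,k) C(-1-a,k)` via `(a+1-k) C(a+1,k) C(-2-a,k) = (a+1+k) C(a,k) C(-1-a,k)`; the factor
`a + 1 - k` needed for this is supplied by `1 + R a k`, whose numerator is `(2k+1)(a+1-k)(a+1+k)`.
-/

/-- Generalized binomial coefficient `C(x, k) = x(x-1)⋯(x-k+1)/k!` for real `x`. -/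
noncomputable def gbc (x : ℝ) (k : ℕ) : ℝ :=
  (∏ i ∈ Finset.range k, (x - i)) / (Nat.factorial k)

/-- `S_n(a) = Σ_{k=0}^{n-1} C(a,k) C(-1-a,k) C(2k,k) / 4^k`. -/
noncomputable def S (a : ℝ) (n : ℕ) : ℝ :=
  ∑ k ∈ Finset.range n, gbc a k * gbc (-1 - a) k * (Nat.choose (2 * k) k) / 4 ^ k

noncomputable def F (a : ℝ) (n : ℕ) : ℝ :=
  (gbc a n * gbc (-1 - a) n * (1 / (n + 1) - 1) -
      (a + 1) / a * (gbc (a + 1) n * gbc (-2 - a) n)) * (Nat.choose (2 * n) n) / 4 ^ n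

noncomputable def R (a : ℝ) (n : ℕ) : ℝ :=
  -(2 * n ^ 2 * (n + 1)) / (n ^ 2 + 2 * (a + 1) ^ 2 * n + (a + 1) ^ 2)

lemma gbc_zero (x : ℝ) : gbc x 0 = 1 := by simp [gbc]

lemma gbc_succ (x : ℝ) (n : ℕ) : gbc x (n + 1) = gbc x n * (x - n) / (n + 1) := by
  simp only [gbc, Finset.prod_range_succ, Nat.factorial_succ]
  push_cast
  rw [div_mul_eq_mul_div, div_div, mul_comm ((n : ℝ) + 1)]

lemma gbc_mul_gbc_add_one (x : ℝ) (n : ℕ) :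
    (x + 1 - n) * (gbc (x + 1) n * gbc (-2 - x) n) = (x + 1 + n) * (gbc x n * gbc (-1 - x) n) := by
  induction n with
  | zero => simp [gbc_zero]
  | succ n ih =>
    simp only [gbc_succ]
    push_cast
    field_simp
    linear_combination (x - n) * (-2 - x - n) * ih

lemma choose_two_mul_succ_succ (n : ℕ) :
    ((2 * (n + 1)).choose (n + 1) : ℝ) = (2 * n).choose n * (2 * (2 * n + 1)) / (n + 1) := by
  rw [eq_div_iff (by positivity)]
  exact_mod_cast (mul_comm _ _).trans ((Nat.succ_mul_centralBinom_succ n).trans (mul_comm _ _))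

lemma one_add_R (a : ℝ) (n : ℕ) (hD : (n : ℝ) ^ 2 + 2 * (a + 1) ^ 2 * n + (a + 1) ^ 2 ≠ 0) :
    1 + R a n = (2 * n + 1) * (a + 1 - n) * (a + 1 + n) /
      (n ^ 2 + 2 * (a + 1) ^ 2 * n + (a + 1) ^ 2) := by
  rw [R, neg_div, ← sub_eq_add_neg, one_sub_div hD]
  ring

lemma F_mul_one_add_R {a : ℝ} (ha : a ≠ 0) {n : ℕ} (hn : 0 < n) :
    F a n * (1 + R a n) = F a (n + 1) * R a (n + 1) := by
  set W := gbc a n * gbc (-1 - a) n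
  set c := ((2 * n).choose n : ℝ) / 4 ^ n
  have hD : (n : ℝ) ^ 2 + 2 * (a + 1) ^ 2 * n + (a + 1) ^ 2 ≠ 0 := by positivity
  have hD' : ((n + 1 : ℕ) : ℝ) ^ 2 + 2 * (a + 1) ^ 2 * (n + 1 : ℕ) + (a + 1) ^ 2 ≠ 0 := by
    positivity
  have hshift := gbc_mul_gbc_add_one a n
  have hF : (a + 1 - n) * F a n =
      W * c * ((1 / (n + 1) - 1) * (a + 1 - n) - (a + 1) * (a + 1 + n) / a) := by
    rw [F]
    linear_combination (-(a + 1) / a * c) * hshift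
  have hF' : F a (n + 1) = W * c * (2 * (2 * n + 1) / (n + 1) / (n + 1) / (n + 1) / 4) *
      ((a - n) * (-1 - a - n) * (1 / (n + 2) - 1) - (a + 1) * (a + 1 + n) * (-2 - a - n) / a) := by
    rw [F, gbc_succ, gbc_succ, gbc_succ, gbc_succ, choose_two_mul_succ_succ]
    push_cast
    linear_combination
      (-(a + 1) / a * (-2 - a - n) * c * (2 * (2 * n + 1)) / (n + 1) / (n + 1) / (n + 1) / 4) *
        hshift
  calc F a n * (1 + R a n)
      = (a + 1 - n) * F a n *
          ((2 * n + 1) * (a + 1 + n) / (n ^ 2 + 2 * (a + 1) ^ 2 * n + (a + 1) ^ 2)) := by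
        rw [one_add_R a n hD]; ring
    _ = F a (n + 1) * R a (n + 1) := by
        rw [hF, hF', R]
        push_cast at hD' ⊢
        field_simp
        ring

lemma F_one_mul_R_one {a : ℝ} (ha : a ≠ 0) : F a 1 * R a 1 = F a 0 := by
  have hD : (1 : ℝ) + 3 * (a + 1) ^ 2 ≠ 0 := by positivity
  simp only [F, R, gbc_succ, gbc_zero]
  norm_num
  field_simp
  ring

lemma sum_range_F {a : ℝ} (ha : a ≠ 0) {n : ℕ} (hn : 0 < n) :
    ∑ k ∈ Finset.range n, F a k = F a n * R a n := by
  induction n, hn using Nat.le_induction with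
  | base => rw [Finset.sum_range_one, F_one_mul_R_one ha]
  | succ n hn ih => rw [Finset.sum_range_succ, ih, ← F_mul_one_add_R ha hn]; ring

lemma summand_div_succ_eq_add_F (a : ℝ) (k : ℕ) :
    gbc a k * gbc (-1 - a) k * (Nat.choose (2 * k) k) / (4 ^ k * (k + 1)) =
      gbc a k * gbc (-1 - a) k * (Nat.choose (2 * k) k) / 4 ^ k +
        (a + 1) / a * (gbc (a + 1) k * gbc (-1 - (a + 1)) k * (Nat.choose (2 * k) k) / 4 ^ k) +
        F a k := by
  rw [F, show -1 - (a + 1) = -2 - a by ring, ← div_div]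
  ring

theorem stmt11_general (n : ℕ) (hn : 0 < n) (a : ℝ) (ha : a ≠ 0) :
    ∑ k ∈ Finset.range n,
        gbc a k * gbc (-1 - a) k * (Nat.choose (2 * k) k) / (4 ^ k * (k + 1)) =
      S a n + (a + 1) / a * S (a + 1) n + F a n * R a n := by
  simp only [summand_div_succ_eq_add_F, Finset.sum_add_distrib, ← Finset.mul_sum, sum_range_F ha hn, S]

theorem stmt11 (n : ℕ) (hn : 0 < n) (a : ℝ) (ha : a ≠ 0)
    (hden : (n : ℝ) ^ 2 + 2 * (a + 1) ^ 2 * n + (a + 1) ^ 2 ≠ 0) :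
    ∑ k ∈ Finset.range n,
        gbc a k * gbc (-1 - a) k * (Nat.choose (2 * k) k) / (4 ^ k * (k + 1)) =
      S a n + (a + 1) / a * S (a + 1) n + F a n * R a n :=
  stmt11_general n hn a ha
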